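/- Let S ⊆ ℕ^d be a GNS and T^k(S,i) ⊆ ℕ^{d+1} its k-thickening along axis i. Then e(T^k(S,i)) = e(S) + m(S), n(T^k(S,i)) = (k+1)·n(S), and c(T^k(S,i)) = (k+1)·c(S). -/
import Mathlib


/-- The minimal generating set of a GNS: `G(S) = S* \ (S* + S*)`. -/
def gensSet {d : ℕ} (S : Set (Fin d → ℕ)) : Set (Fin d → ℕ) :=
  (S \ {0}) \ {x | ∃ a ∈ S \ {0}, ∃ b ∈ S \ {0}, x = a + b}

/-- `e(S)`: number of minimal generators. -/
noncomputable def eNum {d : ℕ} (S : Set (Fin d → ℕ)) : ℕ := (gensSet S).ncard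

/-- `C(S) = {x ∈ ℕ^d : x ≤ h for some hole h}` (componentwise order). -/
def CSet {d : ℕ} (S : Set (Fin d → ℕ)) : Set (Fin d → ℕ) := {x | ∃ h ∈ Sᶜ, x ≤ h}

/-- `c(S) = |C(S)|`. -/
noncomputable def cNum {d : ℕ} (S : Set (Fin d → ℕ)) : ℕ := (CSet S).ncard

/-- `n(S) = |S ∩ C(S)|`. -/
noncomputable def nNum {d : ℕ} (S : Set (Fin d → ℕ)) : ℕ := (S ∩ CSet S).ncard

/-- `M(S) = {0} ∪ {fundamental holes}`. -/
def MSet {d : ℕ} (S : Set (Fin d → ℕ)) : Set (Fin d → ℕ) :=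
  {0} ∪ {h | h ∈ Sᶜ ∧ ∀ s ∈ S, s ≤ h → s = 0}

/-- the multiplicity `m(S) = |M(S)|`. -/
noncomputable def mNum {d : ℕ} (S : Set (Fin d → ℕ)) : ℕ := (MSet S).ncard

/-- The embedding of `ℕ^d` into `ℕ^{d+1}` avoiding coordinate `i`. -/
def emb {d : ℕ} (i : Fin (d + 1)) (s : Fin d → ℕ) : Fin (d + 1) → ℕ :=
  i.insertNth 0 s

/-- The `k`-thickening of `S ⊆ ℕ^d` along axis `i` in `ℕ^{d+1}`. -/
def thick {d : ℕ} (S : Set (Fin d → ℕ)) (k : ℕ) (i : Fin (d + 1)) :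
    Set (Fin (d + 1) → ℕ) :=
  {x | ∃ j ≤ k, ∃ s ∈ S, x = j • Pi.single i 1 + emb i s} ∪
  {x | ∃ y : Fin (d + 1) → ℕ, x = (k + 1) • Pi.single i 1 + y}


section helpers

variable {d : ℕ}

/-- The set of fundamental holes. -/
def FHSet {d : ℕ} (S : Set (Fin d → ℕ)) : Set (Fin d → ℕ) :=
  {h | h ∈ Sᶜ ∧ ∀ s ∈ S, s ≤ h → s = 0}

/-- insertion with concrete types -/
def ins (i : Fin (d + 1)) (a : ℕ) (s : Fin d → ℕ) : Fin (d + 1) → ℕ :=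
  i.insertNth a s

/-- removal with concrete types -/
def rmv (i : Fin (d + 1)) (x : Fin (d + 1) → ℕ) : Fin d → ℕ :=
  i.removeNth x

variable (i : Fin (d + 1))

@[simp] private lemma ins_same (a : ℕ) (s : Fin d → ℕ) : ins i a s i = a := by
  simp [ins]

@[simp] private lemma ins_succAbove (a : ℕ) (s : Fin d → ℕ) (m : Fin d) :
    ins i a s (i.succAbove m) = s m := by
  simp [ins]

@[simp] private lemma rmv_apply (x : Fin (d + 1) → ℕ) (m : Fin d) :
    rmv i x m = x (i.succAbove m) := rfl

@[simp] private lemma rmv_ins (a : ℕ) (s : Fin d → ℕ) : rmv i (ins i a s) = s := by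
  funext m; simp

private lemma funext_split {x y : Fin (d + 1) → ℕ} (h1 : x i = y i)
    (h2 : ∀ m, x (i.succAbove m) = y (i.succAbove m)) : x = y := by
  funext l
  rcases eq_or_ne l i with rfl | hl
  · exact h1
  · obtain ⟨m, rfl⟩ := Fin.exists_succAbove_eq hl
    exact h2 m

private lemma phi_eq (j : ℕ) (s : Fin d → ℕ) :
    j • Pi.single i 1 + emb i s = ins i j s := by
  refine funext_split i ?_ ?_
  · simp [emb, ins, Fin.insertNth_apply_same]
  · intro m
    simp [emb, ins, Fin.insertNth_apply_succAbove, Pi.single_eq_of_ne (i.succAbove_ne m)]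

private lemma ins_self (x : Fin (d + 1) → ℕ) : ins i (x i) (rmv i x) = x :=
  Fin.insertNth_self_removeNth i x

private lemma ins_add (a b : ℕ) (s t : Fin d → ℕ) :
    ins i a s + ins i b t = ins i (a + b) (s + t) := by
  refine funext_split i ?_ ?_ <;> simp

private lemma ins_inj {a b : ℕ} {s t : Fin d → ℕ}
    (h : ins i a s = ins i b t) : a = b ∧ s = t := by
  constructor
  · have := congrFun h i
    simpa using this
  · funext m
    have := congrFun h (i.succAbove m)
    simpa using this

private lemma ins_zero : ins i 0 (0 : Fin d → ℕ) = 0 := by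
  refine funext_split i ?_ ?_ <;> simp

private lemma ins_eq_zero {a : ℕ} {s : Fin d → ℕ} :
    ins i a s = 0 ↔ a = 0 ∧ s = 0 := by
  constructor
  · intro h
    exact ins_inj i (h.trans (ins_zero i).symm)
  · rintro ⟨rfl, rfl⟩
    exact ins_zero i

private lemma mem_thick {S : Set (Fin d → ℕ)} {k : ℕ} {x : Fin (d + 1) → ℕ} :
    x ∈ thick S k i ↔ ((x i ≤ k ∧ rmv i x ∈ S) ∨ k + 1 ≤ x i) := by
  constructor
  · rintro (⟨j, hj, s, hs, rfl⟩ | ⟨y, rfl⟩)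
    · rw [phi_eq]
      left
      simpa using ⟨hj, hs⟩
    · right
      simp [Pi.add_apply, Pi.smul_apply, Pi.single_eq_same]
  · rintro (⟨h1, h2⟩ | h)
    · exact Or.inl ⟨x i, h1, rmv i x, h2, by rw [phi_eq, ins_self]⟩
    · refine Or.inr ⟨x - (k + 1) • Pi.single i 1, ?_⟩
      funext l
      rcases eq_or_ne l i with rfl | hl
      · simp only [Pi.add_apply, Pi.sub_apply, Pi.smul_apply, Pi.single_eq_same, smul_eq_mul,
          mul_one]
        omega
      · simp [Pi.single_eq_of_ne hl]

private lemma mem_thick_ins {S : Set (Fin d → ℕ)} {k j : ℕ} {s : Fin d → ℕ} :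
    ins i j s ∈ thick S k i ↔ ((j ≤ k ∧ s ∈ S) ∨ k + 1 ≤ j) := by
  rw [mem_thick]
  simp

private lemma le_split {x y : Fin (d + 1) → ℕ} :
    x ≤ y ↔ (x i ≤ y i ∧ rmv i x ≤ rmv i y) := by
  constructor
  · intro h
    exact ⟨h i, fun m => h _⟩
  · rintro ⟨h1, h2⟩ l
    rcases eq_or_ne l i with rfl | hl
    · exact h1
    · obtain ⟨m, rfl⟩ := Fin.exists_succAbove_eq hl
      exact h2 m

private lemma rmv_add (x y : Fin (d + 1) → ℕ) :
    rmv i (x + y) = rmv i x + rmv i y := rfl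

private lemma mem_gens {S : Set (Fin d → ℕ)} {x : Fin d → ℕ} :
    x ∈ gensSet S ↔
      x ∈ S ∧ x ≠ 0 ∧ ¬ ∃ a, (a ∈ S ∧ a ≠ 0) ∧ ∃ b, (b ∈ S ∧ b ≠ 0) ∧ x = a + b := by
  simp [gensSet, and_assoc]

end helpers

section main

variable {d : ℕ} {i : Fin (d + 1)} {S : Set (Fin d → ℕ)} {k : ℕ}

private lemma e1_mem (h0 : 0 ∈ S) : ins i 1 (0 : Fin d → ℕ) ∈ thick S k i := by
  rw [mem_thick_ins]
  rcases Nat.eq_zero_or_pos k with rfl | hk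
  · exact Or.inr le_rfl
  · exact Or.inl ⟨hk, h0⟩

private lemma ins_congr {a b : ℕ} {s t : Fin d → ℕ} (h1 : a = b) (h2 : s = t) :
    ins i a s = ins i b t := by rw [h1, h2]

private lemma eq_ins_add {x : Fin (d + 1) → ℕ} {a b : ℕ} {s t : Fin d → ℕ}
    (h1 : x i = a + b) (h2 : rmv i x = s + t) : x = ins i a s + ins i b t := by
  rw [ins_add, ← h1, ← h2, ins_self]

private lemma gens_thick (h0 : 0 ∈ S) :
    gensSet (thick S k i) =
      ((ins i 0 '' gensSet S ∪ {ins i 1 (0 : Fin d → ℕ)}) ∪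
        (fun h => ins i (k + 1) h) '' FHSet S) := by
  ext x
  rw [mem_gens]
  constructor
  · rintro ⟨hT, hne, hnd⟩
    have hx : x = ins i (x i) (rmv i x) := (ins_self i x).symm
    rw [mem_thick] at hT
    -- x i ≤ k + 1
    have hjk : x i ≤ k + 1 := by
      by_contra hc
      push_neg at hc
      refine hnd ⟨ins i 1 0, ⟨e1_mem h0, ?_⟩, ins i (x i - 1) (rmv i x), ⟨?_, ?_⟩, ?_⟩
      · intro h
        exact absurd ((ins_eq_zero i).1 h).1 one_ne_zero
      · exact (mem_thick_ins i).2 (Or.inr (by omega))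
      · intro h
        have := ((ins_eq_zero i).1 h).1
        omega
      · exact eq_ins_add (by omega) (zero_add _).symm
    rcases Nat.lt_or_ge (x i) (k + 1) with hjlt | hjge
    · -- x i ≤ k, so rmv i x ∈ S
      have hsS : rmv i x ∈ S := by
        rcases hT with ⟨_, h⟩ | h
        · exact h
        · omega
      rcases Nat.eq_zero_or_pos (x i) with hj0 | hjpos
      · -- level 0 : minimal generator of S
        refine Or.inl (Or.inl ⟨rmv i x, ?_, by rw [← hj0, ins_self]⟩)
        rw [mem_gens]
        refine ⟨hsS, ?_, ?_⟩
        · intro h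
          exact hne (by rw [hx, hj0, h]; exact ins_zero i)
        · rintro ⟨a, ⟨haS, hane⟩, b, ⟨hbS, hbne⟩, hab⟩
          refine hnd ⟨ins i 0 a, ⟨?_, ?_⟩, ins i 0 b, ⟨?_, ?_⟩, ?_⟩
          · exact (mem_thick_ins i).2 (Or.inl ⟨Nat.zero_le _, haS⟩)
          · intro h; exact hane ((ins_eq_zero i).1 h).2
          · exact (mem_thick_ins i).2 (Or.inl ⟨Nat.zero_le _, hbS⟩)
          · intro h; exact hbne ((ins_eq_zero i).1 h).2
          · exact eq_ins_add (by omega) hab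
      · -- 1 ≤ x i ≤ k : must be ins i 1 0
        have hs0 : rmv i x = 0 := by
          by_contra hs0
          refine hnd ⟨ins i 0 (rmv i x), ⟨?_, ?_⟩, ins i (x i) 0, ⟨?_, ?_⟩, ?_⟩
          · exact (mem_thick_ins i).2 (Or.inl ⟨Nat.zero_le _, hsS⟩)
          · intro h; exact hs0 ((ins_eq_zero i).1 h).2
          · exact (mem_thick_ins i).2 (Or.inl ⟨by omega, h0⟩)
          · intro h; have := ((ins_eq_zero i).1 h).1; omega
          · exact eq_ins_add (by omega) (by rw [add_zero])
        have hj1 : x i = 1 := by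
          by_contra hj1
          refine hnd ⟨ins i 1 0, ⟨e1_mem h0, ?_⟩, ins i (x i - 1) 0, ⟨?_, ?_⟩, ?_⟩
          · intro h; exact absurd ((ins_eq_zero i).1 h).1 one_ne_zero
          · exact (mem_thick_ins i).2 (Or.inl ⟨by omega, h0⟩)
          · intro h; have := ((ins_eq_zero i).1 h).1; omega
          · exact eq_ins_add (by omega) (by rw [hs0, add_zero])
        refine Or.inl (Or.inr ?_)
        rw [Set.mem_singleton_iff, hx, hj1, hs0]
    · -- x i = k + 1
      have hj : x i = k + 1 := by omega
      have hfund : ∀ s' ∈ S, s' ≤ rmv i x → s' = 0 := by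
        intro s' hs'S hle
        by_contra hs'ne
        refine hnd ⟨ins i 0 s', ⟨?_, ?_⟩, ins i (k + 1) (rmv i x - s'), ⟨?_, ?_⟩, ?_⟩
        · exact (mem_thick_ins i).2 (Or.inl ⟨Nat.zero_le _, hs'S⟩)
        · intro h; exact hs'ne ((ins_eq_zero i).1 h).2
        · exact (mem_thick_ins i).2 (Or.inr le_rfl)
        · intro h; have := ((ins_eq_zero i).1 h).1; omega
        · refine eq_ins_add (by omega) ?_
          funext m
          have hm : s' m ≤ rmv i x m := hle m
          simp only [Pi.add_apply, Pi.sub_apply]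
          omega
      by_cases hsS : rmv i x ∈ S
      · -- then rmv i x = 0
        have hs0 : rmv i x = 0 := hfund _ hsS le_rfl
        rcases Nat.eq_zero_or_pos k with rfl | hk
        · exact Or.inl (Or.inr (by rw [Set.mem_singleton_iff, hx, hj, hs0]))
        · exfalso
          refine hnd ⟨ins i 1 0, ⟨e1_mem h0, ?_⟩, ins i k 0, ⟨?_, ?_⟩, ?_⟩
          · intro h; exact absurd ((ins_eq_zero i).1 h).1 one_ne_zero
          · exact (mem_thick_ins i).2 (Or.inl ⟨le_rfl, h0⟩)
          · intro h; have := ((ins_eq_zero i).1 h).1; omega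
          · exact eq_ins_add (by omega) (by rw [hs0, add_zero])
      · -- fundamental hole
        refine Or.inr ⟨rmv i x, ⟨hsS, hfund⟩, ?_⟩
        show ins i (k + 1) (rmv i x) = x
        rw [← hj, ins_self]
  · -- reverse inclusion
    rintro ((⟨g, hg, rfl⟩ | hxB) | ⟨h, hh, rfl⟩)
    · -- embedded generator
      rw [mem_gens] at hg
      obtain ⟨hgS, hgne, hgnd⟩ := hg
      refine ⟨(mem_thick_ins i).2 (Or.inl ⟨Nat.zero_le _, hgS⟩), ?_, ?_⟩
      · intro h; exact hgne ((ins_eq_zero i).1 h).2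
      · rintro ⟨a, ⟨haT, hane⟩, b, ⟨hbT, hbne⟩, hab⟩
        have hci := congrFun hab i
        simp only [ins_same, Pi.add_apply] at hci
        have hai : a i = 0 := by omega
        have hbi : b i = 0 := by omega
        have h2 := congrArg (rmv i) hab
        rw [rmv_ins, rmv_add] at h2
        rw [mem_thick] at haT hbT
        have haS : rmv i a ∈ S := by
          rcases haT with ⟨_, h⟩ | h
          · exact h
          · omega
        have hbS : rmv i b ∈ S := by
          rcases hbT with ⟨_, h⟩ | h
          · exact h
          · omega
        refine hgnd ⟨rmv i a, ⟨haS, ?_⟩, rmv i b, ⟨hbS, ?_⟩, h2⟩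
        · intro h
          exact hane (by rw [← ins_self i a, hai, h]; exact ins_zero i)
        · intro h
          exact hbne (by rw [← ins_self i b, hbi, h]; exact ins_zero i)
    · -- ins i 1 0
      rw [Set.mem_singleton_iff] at hxB
      subst hxB
      refine ⟨e1_mem h0, ?_, ?_⟩
      · intro h; exact absurd ((ins_eq_zero i).1 h).1 one_ne_zero
      · rintro ⟨a, ⟨haT, hane⟩, b, ⟨hbT, hbne⟩, hab⟩
        have hci := congrFun hab i
        simp only [ins_same, Pi.add_apply] at hci
        have h2 := congrArg (rmv i) hab
        rw [rmv_ins, rmv_add] at h2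
        have hra : rmv i a = 0 := by
          funext m
          have hm := congrFun h2 m
          simp only [Pi.add_apply, Pi.zero_apply] at hm ⊢
          omega
        have hrb : rmv i b = 0 := by
          funext m
          have hm := congrFun h2 m
          simp only [Pi.add_apply, Pi.zero_apply] at hm ⊢
          omega
        rcases (by omega : a i = 0 ∨ b i = 0) with h | h
        · exact hane (by rw [← ins_self i a, h, hra]; exact ins_zero i)
        · exact hbne (by rw [← ins_self i b, h, hrb]; exact ins_zero i)
    · -- top fundamental hole
      obtain ⟨hhc, hhf⟩ := hh
      show ins i (k + 1) h ∈ thick S k i ∧ _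
      refine ⟨(mem_thick_ins i).2 (Or.inr le_rfl), ?_, ?_⟩
      · intro hz; have := ((ins_eq_zero i).1 hz).1; omega
      · rintro ⟨a, ⟨haT, hane⟩, b, ⟨hbT, hbne⟩, hab⟩
        have hci := congrFun hab i
        simp only [ins_same, Pi.add_apply] at hci
        have h2 := congrArg (rmv i) hab
        rw [rmv_ins, rmv_add] at h2
        rw [mem_thick] at haT hbT
        have key : ∀ c : Fin (d + 1) → ℕ,
            ((c i ≤ k ∧ rmv i c ∈ S) ∨ k + 1 ≤ c i) → c i ≤ k →
            rmv i c ≤ h → rmv i c = 0 := by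
          rintro c (⟨_, hcS⟩ | hc) hck hch
          · exact hhf _ hcS hch
          · omega
        rcases le_or_gt (a i) k with ha | ha <;> rcases le_or_gt (b i) k with hb | hb
        · have ha0 := key a haT ha (by rw [h2]; exact le_self_add)
          have hb0 := key b hbT hb (by rw [h2]; exact le_add_self)
          rw [ha0, hb0, add_zero] at h2
          exact hhc (h2 ▸ h0)
        · have ha0 := key a haT ha (by rw [h2]; exact le_self_add)
          have hai : a i = 0 := by omega
          exact hane (by rw [← ins_self i a, hai, ha0]; exact ins_zero i)
        · have hb0 := key b hbT hb (by rw [h2]; exact le_add_self)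
          have hbi : b i = 0 := by omega
          exact hbne (by rw [← ins_self i b, hbi, hb0]; exact ins_zero i)
        · omega

private lemma gens_finite (hfin : Sᶜ.Finite) : (gensSet S).Finite := by
  classical
  obtain ⟨B, hB1, hBhole⟩ : ∃ B : Fin d → ℕ, (∀ j, 1 ≤ B j) ∧ ∀ h ∈ Sᶜ, ∀ j, h j < B j := by
    refine ⟨fun j => hfin.toFinset.sup (fun h => h j) + 1, fun j => Nat.succ_le_succ (Nat.zero_le _), ?_⟩
    intro h hh j
    exact Nat.lt_succ_of_le
      (Finset.le_sup (f := fun h' : Fin d → ℕ => h' j) (hfin.mem_toFinset.2 hh))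
  refine Set.Finite.subset (Set.finite_Iic (fun j => 2 * B j)) ?_
  intro x hx
  rw [mem_gens] at hx
  obtain ⟨hxS, hxne, hnd⟩ := hx
  by_contra hle
  rw [Set.mem_Iic, Pi.le_def] at hle
  push_neg at hle
  obtain ⟨j, hj⟩ := hle
  have haS : Pi.single j (B j) ∈ S := by
    by_contra hc
    have := hBhole _ hc j
    rw [Pi.single_eq_same] at this
    omega
  have hbS : x - Pi.single j (B j) ∈ S := by
    by_contra hc
    have h1 := hBhole _ hc j
    have h2 : (x - (Pi.single j (B j) : Fin d → ℕ)) j = x j - B j := by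
      simp only [Pi.sub_apply, Pi.single_eq_same]
    omega
  refine hnd ⟨Pi.single j (B j), ⟨haS, ?_⟩, x - Pi.single j (B j), ⟨hbS, ?_⟩, ?_⟩
  · intro h
    have h' := congrFun h j
    simp only [Pi.single_eq_same, Pi.zero_apply] at h'
    have := hB1 j
    omega
  · intro h
    have h' := congrFun h j
    simp only [Pi.sub_apply, Pi.single_eq_same, Pi.zero_apply] at h'
    omega
  · funext l
    rcases eq_or_ne l j with rfl | hl
    · simp only [Pi.add_apply, Pi.sub_apply, Pi.single_eq_same]
      omega
    · simp [Pi.single_eq_of_ne hl]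

private lemma CSet_finite (hfin : Sᶜ.Finite) : (CSet S).Finite := by
  refine Set.Finite.subset (Set.Finite.biUnion hfin (fun h _ => Set.finite_Iic h)) ?_
  rintro x ⟨h, hh, hxh⟩
  exact Set.mem_biUnion hh hxh

private lemma phi_inj :
    Function.Injective (fun p : ℕ × (Fin d → ℕ) => ins i p.1 p.2) := by
  rintro ⟨a, s⟩ ⟨b, t⟩ h
  obtain ⟨h1, h2⟩ := ins_inj i h
  exact Prod.ext h1 h2

private lemma image_prod_eq (k : ℕ) (A : Set (Fin d → ℕ)) :
    (fun p : ℕ × (Fin d → ℕ) => ins i p.1 p.2) '' (Set.Iic k ×ˢ A) =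
      {x : Fin (d + 1) → ℕ | x i ≤ k ∧ rmv i x ∈ A} := by
  ext x
  constructor
  · rintro ⟨⟨j, s⟩, ⟨hj, hs⟩, rfl⟩
    simpa using ⟨hj, hs⟩
  · rintro ⟨h1, h2⟩
    exact ⟨(x i, rmv i x), ⟨h1, h2⟩, ins_self i x⟩

private lemma ncard_slab (k : ℕ) (A : Set (Fin d → ℕ)) :
    Set.ncard {x : Fin (d + 1) → ℕ | x i ≤ k ∧ rmv i x ∈ A} = (k + 1) * A.ncard := by
  rw [← image_prod_eq, Set.ncard_image_of_injective _ phi_inj, ← Nat.card_coe_set_eq,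
    Nat.card_congr (Equiv.Set.prod _ _), Nat.card_prod, Nat.card_coe_set_eq,
    Nat.card_coe_set_eq, ← Finset.coe_Iic, Set.ncard_coe_finset, Nat.card_Iic]

private lemma CSet_thick :
    CSet (thick S k i) = {x : Fin (d + 1) → ℕ | x i ≤ k ∧ rmv i x ∈ CSet S} := by
  ext x
  constructor
  · rintro ⟨h, hh, hxh⟩
    rw [Set.mem_compl_iff, mem_thick] at hh
    push_neg at hh
    obtain ⟨hh1, hh2⟩ := hh
    have hhk : h i ≤ k := by omega
    rw [le_split i] at hxh
    exact ⟨le_trans hxh.1 hhk, rmv i h, hh1 hhk, hxh.2⟩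
  · rintro ⟨h1, h', hh', hxh'⟩
    refine ⟨ins i (x i) h', ?_, ?_⟩
    · rw [Set.mem_compl_iff, mem_thick_ins]
      push_neg
      exact ⟨fun _ => hh', by omega⟩
    · rw [le_split i]
      simp [hxh']

private lemma inter_thick :
    thick S k i ∩ CSet (thick S k i) =
      {x : Fin (d + 1) → ℕ | x i ≤ k ∧ rmv i x ∈ S ∩ CSet S} := by
  rw [CSet_thick]
  ext x
  constructor
  · rintro ⟨hT, h1, h2⟩
    rw [mem_thick] at hT
    rcases hT with ⟨_, hS⟩ | hT
    · exact ⟨h1, hS, h2⟩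
    · omega
  · rintro ⟨h1, h2, h3⟩
    exact ⟨(mem_thick i).2 (Or.inl ⟨h1, h2⟩), h1, h3⟩

end main

/-- `e(T^k(S,i)) = e(S) + m(S)`, `n(T^k(S,i)) = (k+1)·n(S)` and
`c(T^k(S,i)) = (k+1)·c(S)`. -/
theorem stmt7 {d : ℕ} (S : Set (Fin d → ℕ))
    (h0 : 0 ∈ S) (hadd : ∀ a ∈ S, ∀ b ∈ S, a + b ∈ S) (hfin : Sᶜ.Finite)
    (k : ℕ) (i : Fin (d + 1)) :
    eNum (thick S k i) = eNum S + mNum S ∧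
    nNum (thick S k i) = (k + 1) * nNum S ∧
    cNum (thick S k i) = (k + 1) * cNum S := by
  refine ⟨?_, ?_, ?_⟩
  · -- e part
    have hFHsub : FHSet S ⊆ Sᶜ := fun h hh => hh.1
    have hFHfin : (FHSet S).Finite := hfin.subset hFHsub
    have hGfin : (gensSet S).Finite := gens_finite hfin
    have hinj0 : Function.Injective (ins i 0 : (Fin d → ℕ) → Fin (d + 1) → ℕ) :=
      fun s t h => (ins_inj i h).2
    have hinjk : Function.Injective (fun h : Fin d → ℕ => ins i (k + 1) h) :=
      fun s t h => (ins_inj i h).2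
    have hdAB : Disjoint (ins i 0 '' gensSet S) {ins i 1 (0 : Fin d → ℕ)} := by
      rw [Set.disjoint_left]
      rintro x ⟨g, _, rfl⟩ hxB
      rw [Set.mem_singleton_iff] at hxB
      exact absurd ((ins_inj i hxB).1) (by omega)
    have hdAC : Disjoint (ins i 0 '' gensSet S) ((fun h => ins i (k + 1) h) '' FHSet S) := by
      rw [Set.disjoint_left]
      rintro x ⟨g, _, rfl⟩ ⟨h, _, hC⟩
      exact absurd ((ins_inj i hC.symm).1) (by omega)
    have hdBC : Disjoint {ins i 1 (0 : Fin d → ℕ)} ((fun h => ins i (k + 1) h) '' FHSet S) := by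
      rw [Set.disjoint_left]
      rintro x hxB ⟨h, hh, hC⟩
      rw [Set.mem_singleton_iff] at hxB
      have := ins_inj i (hC.trans hxB)
      exact hh.1 (this.2 ▸ h0)
    have hd0F : Disjoint ({0} : Set (Fin d → ℕ)) (FHSet S) := by
      rw [Set.disjoint_left]
      rintro x hx hxF
      rw [Set.mem_singleton_iff] at hx
      exact hxF.1 (hx ▸ h0)
    rw [eNum, gens_thick h0,
      Set.ncard_union_eq (Set.disjoint_union_left.2 ⟨hdAC, hdBC⟩)
        ((hGfin.image _).union (Set.finite_singleton _)) (hFHfin.image _),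
      Set.ncard_union_eq hdAB (hGfin.image _) (Set.finite_singleton _),
      Set.ncard_image_of_injective _ hinj0, Set.ncard_image_of_injective _ hinjk,
      Set.ncard_singleton]
    have hM : mNum S = 1 + (FHSet S).ncard := by
      rw [mNum, show MSet S = {0} ∪ FHSet S from rfl,
        Set.ncard_union_eq hd0F (Set.finite_singleton _) hFHfin, Set.ncard_singleton]
    rw [eNum, hM]
    ring
  · rw [nNum, inter_thick, ncard_slab, nNum]
  · rw [cNum, CSet_thick, ncard_slab, cNum]
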